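/- arXiv:2505.22036 — 4 statements merged into one kernel-verified Lean document; each statement's English description precedes it below -/
import Mathlib

section
/- Let p be a power of 2, a₀ ∈ 𝔽_q, and A_S = {(a,b) ∈ 𝔽_p × 𝔽̄ : b^p + b = (1+a₀)a²} with group law (a,b)·(a',b') = (a+a', b+b'+aa'^p). For any (1,η) ∈ A_S, the map f_η : A_S → W₂(𝔽_p), (a,b) ↦ (a, b + a²η), is a group isomorphism. -/
set_option linter.unusedSectionVars false

/-- Length-2 Witt vectors in characteristic 2, given by explicit coordinates. -/
structure W2 (R : Type*) where
  fst : R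
  snd : R

namespace W2

variable {R : Type*} [CommRing R] [CharP R 2]

instance : Zero (W2 R) := ⟨⟨0, 0⟩⟩
instance : One (W2 R) := ⟨⟨1, 0⟩⟩
instance : Add (W2 R) := ⟨fun x y => ⟨x.fst + y.fst, x.snd + y.snd + x.fst * y.fst⟩⟩
instance : Neg (W2 R) := ⟨fun x => ⟨x.fst, x.snd + x.fst ^ 2⟩⟩
instance : Mul (W2 R) := ⟨fun x y => ⟨x.fst * y.fst, x.snd * y.fst ^ 2 + x.fst ^ 2 * y.snd⟩⟩

theorem add_def (a b c d : R) : (⟨a, b⟩ : W2 R) + ⟨c, d⟩ = ⟨a + c, b + d + a * c⟩ := rfl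
theorem neg_def (a b : R) : -(⟨a, b⟩ : W2 R) = ⟨a, b + a ^ 2⟩ := rfl
theorem mul_def (a b c d : R) : (⟨a, b⟩ : W2 R) * ⟨c, d⟩ = ⟨a * c, b * c ^ 2 + a ^ 2 * d⟩ := rfl
theorem zero_def : (0 : W2 R) = ⟨0, 0⟩ := rfl
theorem one_def : (1 : W2 R) = ⟨1, 0⟩ := rfl

theorem two_zero : (2 : R) = 0 := by
  have := CharP.cast_eq_zero R 2
  simpa using this

private theorem add_assoc' (a b c : W2 R) : a + b + c = a + (b + c) := by
  obtain ⟨a1, a2⟩ := a; obtain ⟨b1, b2⟩ := b; obtain ⟨c1, c2⟩ := c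
  simp only [add_def, mk.injEq]
  exact ⟨by ring, by ring⟩

private theorem zero_add' (a : W2 R) : 0 + a = a := by
  obtain ⟨a1, a2⟩ := a
  simp only [zero_def, add_def, mk.injEq]
  exact ⟨by ring, by ring⟩

private theorem add_zero' (a : W2 R) : a + 0 = a := by
  obtain ⟨a1, a2⟩ := a
  simp only [zero_def, add_def, mk.injEq]
  exact ⟨by ring, by ring⟩

private theorem add_comm' (a b : W2 R) : a + b = b + a := by
  obtain ⟨a1, a2⟩ := a; obtain ⟨b1, b2⟩ := b
  simp only [add_def, mk.injEq]
  exact ⟨by ring, by ring⟩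

private theorem neg_add_cancel' (a : W2 R) : -a + a = 0 := by
  obtain ⟨a1, a2⟩ := a
  simp only [neg_def, add_def, zero_def, mk.injEq]
  constructor
  · linear_combination a1 * (two_zero (R := R))
  · linear_combination (a2 + a1 ^ 2) * (two_zero (R := R))

instance instAddCommGroup : AddCommGroup (W2 R) where
  add_assoc := add_assoc'
  zero_add := zero_add'
  add_zero := add_zero'
  add_comm := add_comm'
  neg_add_cancel := neg_add_cancel'
  nsmul := nsmulRec
  zsmul := zsmulRec

private theorem left_distrib' (a b c : W2 R) : a * (b + c) = a * b + a * c := by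
  obtain ⟨a1, a2⟩ := a; obtain ⟨b1, b2⟩ := b; obtain ⟨c1, c2⟩ := c
  simp only [add_def, mul_def, mk.injEq]
  constructor
  · ring
  · linear_combination a2 * b1 * c1 * (two_zero (R := R))

private theorem right_distrib' (a b c : W2 R) : (a + b) * c = a * c + b * c := by
  obtain ⟨a1, a2⟩ := a; obtain ⟨b1, b2⟩ := b; obtain ⟨c1, c2⟩ := c
  simp only [add_def, mul_def, mk.injEq]
  constructor
  · ring
  · linear_combination a1 * b1 * c2 * (two_zero (R := R))

private theorem zero_mul' (a : W2 R) : 0 * a = 0 := by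
  obtain ⟨a1, a2⟩ := a
  simp only [zero_def, mul_def, mk.injEq]
  exact ⟨by ring, by ring⟩

private theorem mul_zero' (a : W2 R) : a * 0 = 0 := by
  obtain ⟨a1, a2⟩ := a
  simp only [zero_def, mul_def, mk.injEq]
  exact ⟨by ring, by ring⟩

private theorem mul_assoc' (a b c : W2 R) : a * b * c = a * (b * c) := by
  obtain ⟨a1, a2⟩ := a; obtain ⟨b1, b2⟩ := b; obtain ⟨c1, c2⟩ := c
  simp only [mul_def, mk.injEq]
  exact ⟨by ring, by ring⟩

private theorem one_mul' (a : W2 R) : 1 * a = a := by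
  obtain ⟨a1, a2⟩ := a
  simp only [one_def, mul_def, mk.injEq]
  exact ⟨by ring, by ring⟩

private theorem mul_one' (a : W2 R) : a * 1 = a := by
  obtain ⟨a1, a2⟩ := a
  simp only [one_def, mul_def, mk.injEq]
  exact ⟨by ring, by ring⟩

private theorem mul_comm' (a b : W2 R) : a * b = b * a := by
  obtain ⟨a1, a2⟩ := a; obtain ⟨b1, b2⟩ := b
  simp only [mul_def, mk.injEq]
  exact ⟨by ring, by ring⟩

instance instCommRing : CommRing (W2 R) :=
  { instAddCommGroup (R := R) with
    mul := Mul.mul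
    one := One.one
    left_distrib := left_distrib'
    right_distrib := right_distrib'
    zero_mul := zero_mul'
    mul_zero := mul_zero'
    mul_assoc := mul_assoc'
    one_mul := one_mul'
    mul_one := mul_one'
    mul_comm := mul_comm' }

/-- Componentwise map of length-2 Witt vectors along a map of coefficients. -/
def map {A B : Type*} (g : A → B) (z : W2 A) : W2 B := ⟨g z.fst, g z.snd⟩

end W2

/-- For `p` a power of 2, `A_S = {(a,b) ∈ 𝔽_p × 𝔽̄ : b^p + b = (1+a₀)a²}` with the group law
`(a,b)·(a',b') = (a+a', b+b'+a·a'^p)`, and any `(1,η) ∈ A_S`, the map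
`f_η : (a,b) ↦ (a, b + a²η)` is a group isomorphism `A_S ≅ W₂(𝔽_p)`.
Here `𝔽_p ⊂ F` (resp. `W₂(𝔽_p) ⊂ W₂(F)`) is the set of (pairs of) elements fixed by the
`p`-power Frobenius, and the claim is: `f_η` is a bijection of `A_S` onto `W₂(𝔽_p)` taking
the `A_S`-group law to Witt vector addition. -/
theorem AS_iso_W2 (p k : ℕ) (hk : 0 < k) (hp : p = 2 ^ k)
    (F : Type*) [Field F] [CharP F 2] (a₀ η : F) (hη : η ^ p + η = 1 + a₀) :
    Set.BijOn (fun z : F × F => W2.mk z.1 (z.2 + z.1 ^ 2 * η))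
      {z : F × F | z.1 ^ p = z.1 ∧ z.2 ^ p + z.2 = (1 + a₀) * z.1 ^ 2}
      {w : W2 F | w.fst ^ p = w.fst ∧ w.snd ^ p = w.snd}
    ∧ ∀ z w : F × F,
        z ∈ {z : F × F | z.1 ^ p = z.1 ∧ z.2 ^ p + z.2 = (1 + a₀) * z.1 ^ 2} →
        w ∈ {z : F × F | z.1 ^ p = z.1 ∧ z.2 ^ p + z.2 = (1 + a₀) * z.1 ^ 2} →
        W2.mk (z.1 + w.1) ((z.2 + w.2 + z.1 * w.1 ^ p) + (z.1 + w.1) ^ 2 * η)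
          = W2.mk z.1 (z.2 + z.1 ^ 2 * η) + W2.mk w.1 (w.2 + w.1 ^ 2 * η) := by
  have h2 : (2 : F) = 0 := by simpa using CharP.cast_eq_zero F 2
  haveI : Fact (Nat.Prime 2) := ⟨by norm_num⟩
  have hfrob : ∀ x y : F, (x + y) ^ p = x ^ p + y ^ p := by
    subst hp; intro x y; exact add_pow_char_pow x y 2 k
  have hsq : ∀ x y : F, x ^ p = x → (x ^ 2 * y) ^ p = x ^ 2 * y ^ p := by
    intro x y hx
    rw [mul_pow, ← pow_mul, mul_comm 2 p, pow_mul, hx]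
  constructor
  · refine ⟨?_, ?_, ?_⟩
    · rintro ⟨a, b⟩ ⟨ha, hb⟩
      refine ⟨ha, ?_⟩
      show (b + a ^ 2 * η) ^ p = b + a ^ 2 * η
      rw [hfrob, hsq a η ha]
      linear_combination hb + a ^ 2 * hη + ((1 + a₀) * a ^ 2 - b - a ^ 2 * η) * h2
    · rintro ⟨a, b⟩ ⟨ha, hb⟩ ⟨c, d⟩ ⟨hc, hd⟩ heq
      simp only [W2.mk.injEq] at heq
      obtain ⟨h1, hsnd⟩ := heq
      subst h1
      have : b = d := by linear_combination hsnd
      simp [this]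
    · rintro ⟨u, v⟩ ⟨hu, hv⟩
      refine ⟨(u, v + u ^ 2 * η), ⟨hu, ?_⟩, ?_⟩
      · show (v + u ^ 2 * η) ^ p + (v + u ^ 2 * η) = (1 + a₀) * u ^ 2
        rw [hfrob, hsq u η hu]
        linear_combination hv + u ^ 2 * hη + v * h2
      · simp only [W2.mk.injEq]
        exact ⟨trivial, by linear_combination u ^ 2 * η * h2⟩
  · rintro ⟨a, b⟩ ⟨c, d⟩ ⟨ha, hb⟩ ⟨hc, hd⟩
    simp only [W2.add_def, W2.mk.injEq]
    refine ⟨trivial, ?_⟩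
    linear_combination a * hc + a * c * η * h2
end

section
/- Let p be a power of 2, a₀ ∈ 𝔽_q, and suppose α ∈ 𝔽_q satisfies α^{p^{-1}} + α = a₀ + 1. Then the map (x,z) ↦ (x, z + α^{p^{-1}}x²) defines an isomorphism from the curve C_S : z^p + z = x^{p+1} + a₀x² onto the curve y^p + y + x^{p+1} + x² = α(x^p + x)², i.e., onto L_p^{-1}(T_α) where T_α = {(s, αs²)} ⊂ W₂. -/
/-- Let `p` be a power of 2 and suppose `α ∈ 𝔽_q` satisfies `α^{p^{-1}} + α = a₀ + 1`
(we write `β = α^{p^{-1}}`, i.e. `β^p = α`). Then `(x,z) ↦ (x, z + α^{p^{-1}}x²)` defines an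
isomorphism (on points, a bijection) from the curve `C_S : z^p + z = x^{p+1} + a₀x²`
onto the curve `y^p + y + x^{p+1} + x² = α(x^p + x)²`, i.e. onto `L_p^{-1}(T_α)`. -/
theorem CS_iso_lang_preimage (p k : ℕ) (hk : 0 < k) (hp : p = 2 ^ k)
    (F : Type*) [Field F] [CharP F 2] (a₀ α β : F) (hβ : β ^ p = α) (hαβ : β + α = a₀ + 1) :
    Set.BijOn (fun w : F × F => (w.1, w.2 + β * w.1 ^ 2))
      {w : F × F | w.2 ^ p + w.2 = w.1 ^ (p + 1) + a₀ * w.1 ^ 2}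
      {w : F × F | w.2 ^ p + w.2 + w.1 ^ (p + 1) + w.1 ^ 2 = α * (w.1 ^ p + w.1) ^ 2} := by
  set f : F × F → F × F := fun w => (w.1, w.2 + β * w.1 ^ 2) with hf
  set s : Set (F × F) := {w : F × F | w.2 ^ p + w.2 = w.1 ^ (p + 1) + a₀ * w.1 ^ 2}
  set t : Set (F × F) :=
    {w : F × F | w.2 ^ p + w.2 + w.1 ^ (p + 1) + w.1 ^ 2 = α * (w.1 ^ p + w.1) ^ 2}
  have h2 : (2 : F) = 0 := CharP.cast_eq_zero F 2
  have hpow : ∀ a b : F, (a + b) ^ p = a ^ p + b ^ p := by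
    intro a b; rw [hp]; exact add_pow_char_pow a b 2 k
  have hx2 : ∀ x : F, (x ^ p + x) ^ 2 = (x ^ 2) ^ p + x ^ 2 := by
    intro x
    rw [add_pow_char, ← pow_mul, ← pow_mul, mul_comm]
  have key : ∀ x z : F, (z ^ p + z = x ^ (p + 1) + a₀ * x ^ 2) ↔
      ((z + β * x ^ 2) ^ p + (z + β * x ^ 2) + x ^ (p + 1) + x ^ 2
        = α * (x ^ p + x) ^ 2) := by
    intro x z
    rw [hpow, hx2, mul_pow, hβ]
    constructor
    · intro h
      linear_combination h + x ^ 2 * hαβ +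
        (a₀ * x ^ 2 + x ^ 2 - α * x ^ 2 + x ^ (p + 1)) * h2
    · intro h
      linear_combination h - x ^ 2 * hαβ -
        (a₀ * x ^ 2 + x ^ 2 - α * x ^ 2 + x ^ (p + 1)) * h2
  have key' : ∀ w : F × F, w ∈ s ↔ f w ∈ t := fun w => key w.1 w.2
  have hinv : ∀ w : F × F, f (f w) = w := by
    intro w
    simp only [hf]
    ext
    · rfl
    · show w.2 + β * w.1 ^ 2 + β * w.1 ^ 2 = w.2
      linear_combination (β * w.1 ^ 2) * h2
  have hmapsS : Set.MapsTo f s t := fun w hw => (key' w).mp hw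
  have hmapsT : Set.MapsTo f t s := by
    intro w hw
    rw [key', hinv]
    exact hw
  exact Set.InvOn.bijOn ⟨fun w _ => hinv w, fun w _ => hinv w⟩ hmapsS hmapsT
end

section
/- For an 𝔽_p-linearized polynomial g(x) = Σ b_i x^{p^i} over 𝔽_q, define g*(x) = Σ (b_i x)^{p^{-i}}. Then for every t ∈ 𝔽_q there exists d(x) ∈ 𝔽_q[x] with d(x)^p + d(x) = g*(t)x + t·g(x). -/
set_option maxHeartbeats 1000000

open Polynomial

/-- For an `𝔽_p`-linearized polynomial `g(x) = Σ_{i=0}^m b_i x^{p^i}` over `𝔽_q`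
(characteristic 2) and any `t ∈ 𝔽_q`, there exists `d(x) ∈ 𝔽_q[x]` with
`d(x)^p + d(x) = g*(t)·x + t·g(x)`, where `g*(t) = Σ_i (b_i t)^{p^{-i}}` is expressed via the
(unique) `p^i`-th roots `c i` of `b_i·t`. -/
theorem adjoint_equivalence (p k : ℕ) (hk : 0 < k) (hp : p = 2 ^ k)
    (F : Type*) [Field F] [Fintype F] [CharP F 2]
    (m : ℕ) (b : ℕ → F) (t : F) (c : ℕ → F)
    (hc : ∀ i ∈ Finset.range (m + 1), c i ^ p ^ i = b i * t) :
    ∃ d : Polynomial F,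
      d ^ p + d = C (∑ i ∈ Finset.range (m + 1), c i) * X
        + C t * ∑ i ∈ Finset.range (m + 1), C (b i) * X ^ p ^ i := by
  subst hp
  haveI : ExpChar (Polynomial F) 2 := ExpChar.prime Nat.prime_two
  set q : ℕ := 2 ^ k with hq
  have hqpow : ∀ (a : Polynomial F) (j : ℕ), (a ^ q ^ j) ^ q = a ^ q ^ (j + 1) := by
    intro a j
    rw [← pow_mul, ← pow_succ]
  refine ⟨∑ i ∈ Finset.range (m + 1), ∑ j ∈ Finset.range i, (C (c i) * X) ^ q ^ j, ?_⟩
  have hsq : ∀ (a : Polynomial F), a ^ q = a ^ 2 ^ k := by intro a; rw [hq]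
  have key : ∀ i ∈ Finset.range (m + 1),
      (∑ j ∈ Finset.range i, (C (c i) * X) ^ q ^ j) ^ q
        + ∑ j ∈ Finset.range i, (C (c i) * X) ^ q ^ j
      = C (c i) * X + C t * (C (b i) * X ^ q ^ i) := by
    intro i hi
    set u : Polynomial F := C (c i) * X with hu
    have h1 : (∑ j ∈ Finset.range i, u ^ q ^ j) ^ q = ∑ j ∈ Finset.range i, u ^ q ^ (j + 1) := by
      rw [hsq, sum_pow_char_pow]
      exact Finset.sum_congr rfl fun j _ => by rw [← hsq, hqpow]
    rw [h1, ← Finset.sum_add_distrib]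
    have h2 : ∀ j : ℕ, u ^ q ^ (j + 1) + u ^ q ^ j = u ^ q ^ (j + 1) - u ^ q ^ j := by
      intro j; rw [CharTwo.sub_eq_add]
    calc (∑ j ∈ Finset.range i, (u ^ q ^ (j + 1) + u ^ q ^ j))
        = ∑ j ∈ Finset.range i, ((fun n => u ^ q ^ n) (j + 1) - (fun n => u ^ q ^ n) j) := by
          exact Finset.sum_congr rfl fun j _ => h2 j
      _ = u ^ q ^ i - u ^ q ^ 0 := Finset.sum_range_sub (fun n => u ^ q ^ n) i
      _ = u ^ q ^ i + u := by rw [CharTwo.sub_eq_add, pow_zero, pow_one]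
      _ = C (c i) * X + C t * (C (b i) * X ^ q ^ i) := by
          rw [hu, mul_pow, ← C_pow, hc i hi, add_comm, mul_comm (b i) t, C_mul, mul_assoc]
  calc (∑ i ∈ Finset.range (m + 1), ∑ j ∈ Finset.range i, (C (c i) * X) ^ q ^ j) ^ q
        + ∑ i ∈ Finset.range (m + 1), ∑ j ∈ Finset.range i, (C (c i) * X) ^ q ^ j
      = ∑ i ∈ Finset.range (m + 1),
          ((∑ j ∈ Finset.range i, (C (c i) * X) ^ q ^ j) ^ q
            + ∑ j ∈ Finset.range i, (C (c i) * X) ^ q ^ j) := by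
        rw [hsq, sum_pow_char_pow, ← Finset.sum_add_distrib]
    _ = ∑ i ∈ Finset.range (m + 1), (C (c i) * X + C t * (C (b i) * X ^ q ^ i)) :=
        Finset.sum_congr rfl key
    _ = C (∑ i ∈ Finset.range (m + 1), c i) * X
        + C t * ∑ i ∈ Finset.range (m + 1), C (b i) * X ^ q ^ i := by
        rw [Finset.sum_add_distrib, ← Finset.sum_mul, ← Finset.mul_sum, map_sum]
end

section
/- Let p be a power of 2, n even, f_Ū(x) = Σ_{i=0}^{(n/2)−1} x^{p^{2i}}, and R(x) = Σ_{i=1}^{n/2} x^{p^{2i−1}}. Then f_Ū(x)^{p+1} is equivalent to xR(x) modulo the image of d ↦ d^p + d; i.e., there exists Δ(x) ∈ 𝔽_q[x] with Δ(0)=0 and Δ(x)^p + Δ(x) = xR(x) + f_Ū(x)^{p+1}. -/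
open Polynomial

section Aux

variable {F : Type*} [Field F] [CharP F 2]

/-- The predicate: `c` is in the image of `d ↦ d^p + d` with `d(0) = 0`. -/
private def IsImg (p : ℕ) (c : Polynomial F) : Prop :=
  ∃ d : Polynomial F, d.eval 0 = 0 ∧ d ^ p + d = c

private lemma two_zero : (2 : Polynomial F) = 0 := by
  haveI : CharP (Polynomial F) 2 := Polynomial.instCharP 2
  exact CharTwo.two_eq_zero

private lemma frob_add (k : ℕ) (a b : Polynomial F) :
    (a + b) ^ 2 ^ k = a ^ 2 ^ k + b ^ 2 ^ k := by
  haveI : Fact (Nat.Prime 2) := ⟨Nat.prime_two⟩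
  haveI : CharP (Polynomial F) 2 := Polynomial.instCharP 2
  exact add_pow_char_pow a b 2 k

private lemma isImg_zero (p k : ℕ) (hp : p = 2 ^ k) : IsImg p (0 : Polynomial F) :=
  ⟨0, by simp, by rw [zero_pow (by simp [hp] : p ≠ 0)]; simp⟩

private lemma isImg_add {p : ℕ} (k : ℕ) (hp : p = 2 ^ k) {c₁ c₂ : Polynomial F}
    (h₁ : IsImg p c₁) (h₂ : IsImg p c₂) : IsImg p (c₁ + c₂) := by
  obtain ⟨d₁, hd₁, he₁⟩ := h₁
  obtain ⟨d₂, hd₂, he₂⟩ := h₂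
  refine ⟨d₁ + d₂, by simp [hd₁, hd₂], ?_⟩
  subst hp
  rw [frob_add]
  linear_combination he₁ + he₂

private lemma isImg_tele {p : ℕ} (k : ℕ) (hp : p = 2 ^ k) (g : Polynomial F)
    (hg : g.eval 0 = 0) (b : ℕ) : IsImg p (g ^ p ^ b + g) := by
  have hp0 : p ≠ 0 := by simp [hp]
  have hf : ∀ a b : Polynomial F, (a + b) ^ p = a ^ p + b ^ p := fun a b => by
    rw [hp]; exact frob_add k a b
  induction b with
  | zero =>
    refine ⟨0, by simp, ?_⟩
    rw [zero_pow hp0, pow_zero, pow_one]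
    linear_combination (-g) * two_zero (F := F)
  | succ b ih =>
    obtain ⟨d, hd0, hd⟩ := ih
    refine ⟨d + g ^ p ^ b, ?_, ?_⟩
    · simp [hd0, hg, zero_pow (pow_ne_zero b hp0)]
    · rw [hf, ← pow_mul, ← pow_succ]
      linear_combination hd + (g ^ p ^ b) * two_zero (F := F)

private lemma isImg_mono {p : ℕ} (k : ℕ) (hp : p = 2 ^ k) {a b : ℕ} (hb : b ≤ a) :
    IsImg p ((X : Polynomial F) ^ (p ^ a + p ^ b) + X ^ (p ^ (a - b) + 1)) := by
  have hg : ((X : Polynomial F) ^ (p ^ (a - b) + 1)).eval 0 = 0 := by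
    simp [zero_pow]
  have h := isImg_tele k hp ((X : Polynomial F) ^ (p ^ (a - b) + 1)) hg b
  rw [← pow_mul] at h
  have he : (p ^ (a - b) + 1) * p ^ b = p ^ a + p ^ b := by
    rw [add_mul, one_mul, ← pow_add, Nat.sub_add_cancel hb]
  rwa [he] at h

/-- exponent used in the reduction of `X^(p^(2i+1) + p^(2j))`. -/
private def ered (i j : ℕ) : ℕ := if j ≤ i then 2 * (i - j) + 1 else 2 * (j - i) - 1

private lemma isImg_pair {p : ℕ} (k : ℕ) (hp : p = 2 ^ k) (i j : ℕ) :
    IsImg p ((X : Polynomial F) ^ (p ^ (2 * i + 1) + p ^ (2 * j))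
      + X ^ (p ^ (ered i j) + 1)) := by
  unfold ered
  by_cases h : j ≤ i
  · rw [if_pos h]
    have hb : 2 * j ≤ 2 * i + 1 := by omega
    have := isImg_mono (F := F) k hp hb
    rwa [show 2 * i + 1 - 2 * j = 2 * (i - j) + 1 by omega] at this
  · rw [if_neg h]
    have hb : 2 * i + 1 ≤ 2 * j := by omega
    have := isImg_mono (F := F) k hp hb
    rwa [show 2 * j - (2 * i + 1) = 2 * (j - i) - 1 by omega,
      Nat.add_comm (p ^ (2 * j))] at this

private lemma gsum (p : ℕ) (m : ℕ) :
    (∑ i ∈ Finset.range m, ∑ j ∈ Finset.range m, (X : Polynomial F) ^ (p ^ (ered i j) + 1))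
      = ∑ u ∈ Finset.range m, (X : Polynomial F) ^ (p ^ (2 * u + 1) + 1) := by
  induction m with
  | zero => simp
  | succ m ih =>
    have hrow : (∑ j ∈ Finset.range m, (X : Polynomial F) ^ (p ^ (ered m j) + 1))
        = ∑ u ∈ Finset.range m, (X : Polynomial F) ^ (p ^ (2 * u + 3) + 1) := by
      rw [← Finset.sum_range_reflect (fun u => (X : Polynomial F) ^ (p ^ (2 * u + 3) + 1)) m]
      refine Finset.sum_congr rfl fun j hj => ?_
      rw [Finset.mem_range] at hj
      unfold ered
      rw [if_pos (by omega), show 2 * (m - j) + 1 = 2 * (m - 1 - j) + 3 from by omega]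
    have hcol : (∑ i ∈ Finset.range m, (X : Polynomial F) ^ (p ^ (ered i m) + 1))
        = ∑ u ∈ Finset.range m, (X : Polynomial F) ^ (p ^ (2 * u + 1) + 1) := by
      rw [← Finset.sum_range_reflect (fun u => (X : Polynomial F) ^ (p ^ (2 * u + 1) + 1)) m]
      refine Finset.sum_congr rfl fun i hi => ?_
      rw [Finset.mem_range] at hi
      unfold ered
      rw [if_neg (by omega), show 2 * (m - i) - 1 = 2 * (m - 1 - i) + 1 from by omega]
    have hdiag : ered m m = 1 := by unfold ered; simp
    have key : (∑ u ∈ Finset.range m, (X : Polynomial F) ^ (p ^ (2 * u + 3) + 1))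
          + (X : Polynomial F) ^ (p ^ 1 + 1)
        = (∑ u ∈ Finset.range m, (X : Polynomial F) ^ (p ^ (2 * u + 1) + 1))
          + (X : Polynomial F) ^ (p ^ (2 * m + 1) + 1) := by
      rw [← Finset.sum_range_succ (fun u => (X : Polynomial F) ^ (p ^ (2 * u + 1) + 1)) m,
        Finset.sum_range_succ' (fun u => (X : Polynomial F) ^ (p ^ (2 * u + 1) + 1)) m]
      congr 1
    simp only [Finset.sum_range_succ]
    rw [Finset.sum_add_distrib, ih, hrow, hcol, hdiag, key]
    linear_combination (∑ u ∈ Finset.range m, (X : Polynomial F) ^ (p ^ (2 * u + 1) + 1)) * two_zero (F := F)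

end Aux

/-- Let `p` be a power of 2, `n` even and positive, `f_Ū(x) = Σ_{i=0}^{n/2−1} x^{p^{2i}}`, and
`R(x) = Σ_{i=1}^{n/2} x^{p^{2i−1}}`. Then over `𝔽_q ⊇ 𝔽_{p^{4n}}` the polynomial
`f_Ū(x)^{p+1}` is equivalent to `xR(x)` modulo the image of `d ↦ d^p + d`: there exists
`Δ ∈ 𝔽_q[x]` with `Δ(0) = 0` and `Δ^p + Δ = xR(x) + f_Ū(x)^{p+1}`. -/
theorem xR_equiv_fU_power (p k : ℕ) (hk : 0 < k) (hp : p = 2 ^ k)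
    (n : ℕ) (hn : 0 < n) (hne : Even n)
    (F : Type*) [Field F] [Fintype F] [CharP F 2]
    (hcard : ∃ s : ℕ, 0 < s ∧ Fintype.card F = p ^ (4 * n * s)) :
    ∃ Δ : Polynomial F, Δ.eval 0 = 0 ∧
      Δ ^ p + Δ = X * (∑ i ∈ Finset.range (n / 2), (X : Polynomial F) ^ p ^ (2 * i + 1))
        + (∑ i ∈ Finset.range (n / 2), (X : Polynomial F) ^ p ^ (2 * i)) ^ (p + 1) := by
  haveI : Fact (Nat.Prime 2) := ⟨Nat.prime_two⟩
  haveI : CharP (Polynomial F) 2 := Polynomial.instCharP 2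
  set m := n / 2 with hm
  have hfp : (∑ i ∈ Finset.range m, (X : Polynomial F) ^ p ^ (2 * i)) ^ (p + 1)
      = ∑ i ∈ Finset.range m, ∑ j ∈ Finset.range m,
          (X : Polynomial F) ^ (p ^ (2 * i + 1) + p ^ (2 * j)) := by
    subst hp
    rw [pow_succ, sum_pow_char_pow, Finset.sum_mul_sum]
    refine Finset.sum_congr rfl fun i _ => Finset.sum_congr rfl fun j _ => ?_
    rw [← pow_mul, ← pow_succ, ← pow_add]
  have hXR : X * (∑ i ∈ Finset.range m, (X : Polynomial F) ^ p ^ (2 * i + 1))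
      = ∑ u ∈ Finset.range m, (X : Polynomial F) ^ (p ^ (2 * u + 1) + 1) := by
    rw [Finset.mul_sum]
    exact Finset.sum_congr rfl fun i _ => (pow_succ' X _).symm
  have hmem : IsImg p (∑ i ∈ Finset.range m, ∑ j ∈ Finset.range m,
      ((X : Polynomial F) ^ (p ^ (2 * i + 1) + p ^ (2 * j))
        + X ^ (p ^ (ered i j) + 1))) := by
    refine Finset.sum_induction _ _ (fun a b ha hb => isImg_add k hp ha hb)
      (isImg_zero p k hp) fun i _ => ?_
    exact Finset.sum_induction _ _ (fun a b ha hb => isImg_add k hp ha hb)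
      (isImg_zero p k hp) fun j _ => isImg_pair k hp i j
  obtain ⟨Δ, hΔ0, hΔ⟩ := hmem
  refine ⟨Δ, hΔ0, ?_⟩
  rw [hΔ]
  simp only [Finset.sum_add_distrib]
  rw [gsum, ← hfp, hXR]
  ring
end
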